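/- For every z ∈ 𝔻, h(f(z)) = g(h(z)); that is, h is a topological conjugacy from f to g. -/

import Mathlib

/-- The open unit disk in `ℂ`. -/
def unitDisk : Set ℂ := {z : ℂ | ‖z‖ < 1}

/-- The map `f` on the open unit disk. -/
noncomputable def mapF (z : ℂ) : ℂ :=
  if z = 0 then 0 else
    (Real.exp 1 * z / (Real.exp 1 * ‖z‖ - ‖z‖ + 1)) *
      Complex.exp (2 * Real.pi * Complex.I *
        Real.log (‖z‖ / (1 - ‖z‖)))

/-- The map `F`, the inverse of `f`, on the open unit disk. -/
noncomputable def mapFinv (w : ℂ) : ℂ :=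
  if w = 0 then 0 else
    ((Real.exp 1)⁻¹ * w / ((Real.exp 1)⁻¹ * ‖w‖ - ‖w‖ + 1)) *
      Complex.exp (-(2 * Real.pi * Complex.I *
        Real.log (‖w‖ / (1 - ‖w‖))))

/-- The map `g` on `ℂ`. -/
noncomputable def mapG (z : ℂ) : ℂ :=
  if z = 0 then 0 else
    Real.exp 1 * z * Complex.exp (2 * Real.pi * Complex.I * Real.log (‖z‖))

/-- The map `G`, the inverse of `g`, on `ℂ`. -/
noncomputable def mapGinv (w : ℂ) : ℂ :=
  if w = 0 then 0 else
    (Real.exp 1)⁻¹ * w * Complex.exp (-(2 * Real.pi * Complex.I * Real.log (‖w‖)))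

/-- The conjugacy `h` from the open unit disk onto `ℂ`. -/
noncomputable def mapH (z : ℂ) : ℂ := z / (1 - ‖z‖)

/-- The inverse of the conjugacy `h`. -/
noncomputable def mapHinv (w : ℂ) : ℂ := w / (1 + ‖w‖)

/-! For `z ≠ 0` with `r = ‖z‖ < 1`, `f z` is `z` scaled by `e / (1 + (e - 1) r)` and rotated
by the phase `exp (2πi log (r / (1 - r)))`. Hence `1 - ‖f z‖ = (1 - r) / (1 + (e - 1) r)`, the
scalings cancel in `h (f z) = e z · phase / (1 - r)`, and since `‖h z‖ = r / (1 - r)` this is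
exactly `g (h z)`. -/

open Complex in
theorem norm_exp_two_pi_I_mul_ofReal (t : ℝ) : ‖exp (2 * Real.pi * I * t)‖ = 1 := by
  rw [show 2 * Real.pi * I * t = ((2 * Real.pi * t : ℝ) : ℂ) * I by push_cast; ring]
  exact norm_exp_ofReal_mul_I _

theorem exp_one_mul_sub_add_one_pos {r : ℝ} (hr : 0 ≤ r) : 0 < Real.exp 1 * r - r + 1 := by
  nlinarith [Real.add_one_le_exp 1]

theorem norm_mapF (z : ℂ) :
    ‖mapF z‖ = Real.exp 1 * ‖z‖ / (Real.exp 1 * ‖z‖ - ‖z‖ + 1) := by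
  rcases eq_or_ne z 0 with rfl | hz
  · simp [mapF]
  have hD := exp_one_mul_sub_add_one_pos (norm_nonneg z)
  have hDc : (Real.exp 1 : ℂ) * ‖z‖ - ‖z‖ + 1 = ((Real.exp 1 * ‖z‖ - ‖z‖ + 1 : ℝ) : ℂ) := by
    push_cast; ring
  rw [mapF, if_neg hz, norm_mul, norm_exp_two_pi_I_mul_ofReal, mul_one, norm_div, hDc,
    norm_mul, Complex.norm_real, Complex.norm_real, Real.norm_of_nonneg hD.le,
    Real.norm_of_nonneg (Real.exp_pos 1).le]

theorem one_sub_norm_mapF (z : ℂ) :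
    1 - ‖mapF z‖ = (1 - ‖z‖) / (Real.exp 1 * ‖z‖ - ‖z‖ + 1) := by
  have hD := (exp_one_mul_sub_add_one_pos (norm_nonneg z)).ne'
  rw [norm_mapF, eq_div_iff hD, sub_mul, div_mul_cancel₀ _ hD]
  ring

theorem mapH_eq_div_ofReal (z : ℂ) : mapH z = z / ((1 - ‖z‖ : ℝ) : ℂ) := by
  simp [mapH]

theorem norm_mapH {z : ℂ} (hz : ‖z‖ ≤ 1) : ‖mapH z‖ = ‖z‖ / (1 - ‖z‖) := by
  rw [mapH, norm_div, show (1 : ℂ) - ‖z‖ = ((1 - ‖z‖ : ℝ) : ℂ) by push_cast; ring,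
    Complex.norm_real, Real.norm_of_nonneg (sub_nonneg.mpr hz)]

theorem mapH_ne_zero {z : ℂ} (hz : z ≠ 0) (hz1 : ‖z‖ < 1) : mapH z ≠ 0 := by
  rw [← norm_ne_zero_iff, norm_mapH hz1.le]
  exact div_ne_zero (norm_ne_zero_iff.mpr hz) (sub_pos.mpr hz1).ne'

/-- `h` conjugates `f` to `g`: `h ∘ f = g ∘ h` on the open unit disk. -/
theorem stmt_8 : ∀ z ∈ unitDisk, mapH (mapF z) = mapG (mapH z) := by
  intro z hz
  rcases eq_or_ne z 0 with rfl | hz0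
  · simp [mapF, mapG, mapH]
  have hr : ‖z‖ < 1 := hz
  have hD : ((Real.exp 1 * ‖z‖ - ‖z‖ + 1 : ℝ) : ℂ) ≠ 0 :=
    Complex.ofReal_ne_zero.mpr (exp_one_mul_sub_add_one_pos (norm_nonneg z)).ne'
  rw [mapG, if_neg (mapH_ne_zero hz0 hr), norm_mapH hr.le, mapH_eq_div_ofReal (mapF z),
    one_sub_norm_mapF, mapF, if_neg hz0, mapH_eq_div_ofReal z]
  push_cast [-Complex.ofReal_exp] at hD ⊢
  rw [div_mul_eq_mul_div, div_div_div_cancel_right₀ hD]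
  ring
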